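/- For every integer n ≥ 1, the glued-stair Schur multiple zeta value satisfies the 2×2 Jacobi–Trudi identity G_{1,3}(n) = A_{1,3}(n) · B_{1,3}(n−1) − S_{1,3}(n) · S⋆_{1,3}(n). -/

import Mathlib

open Filter

/-! ## Skew Young diagrams, tableaux and Schur sums -/

/-- `D` is the skew Young diagram `D(λ/μ)` of the partition pair `lam/mu` with `h` rows:
`D(λ/μ) = {(i,j) : 1 ≤ i ≤ h, μ_i < j ≤ λ_i}`. -/
def IsSkewDiagramOf (D : Finset (ℤ × ℤ)) (h : ℕ) (lam mu : ℕ → ℕ) : Prop :=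
  (∀ i, 1 ≤ i → i < h → lam (i + 1) ≤ lam i) ∧
  (∀ i, 1 ≤ i → i ≤ h → 1 ≤ lam i) ∧
  (∀ i, 1 ≤ i → i < h → mu (i + 1) ≤ mu i) ∧
  (∀ i, 1 ≤ i → i ≤ h → mu i ≤ lam i) ∧
  (∀ p : ℤ × ℤ, p ∈ D ↔ ∃ i j : ℕ, 1 ≤ i ∧ i ≤ h ∧ mu i < j ∧ j ≤ lam i ∧
      p = ((i : ℤ), (j : ℤ)))

/-- `D` is a skew Young diagram (in its original position, rows `1,…,h`). -/
def IsSkewDiagram (D : Finset (ℤ × ℤ)) : Prop :=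
  ∃ h lam mu, IsSkewDiagramOf D h lam mu

/-- Translation of a diagram by a vector. -/
def translateD (D : Finset (ℤ × ℤ)) (v : ℤ × ℤ) : Finset (ℤ × ℤ) :=
  D.image fun p => (p.1 + v.1, p.2 + v.2)

/-- `D` has the shape of a skew Young diagram (some translate of it is one). -/
def IsSkewShape (D : Finset (ℤ × ℤ)) : Prop :=
  ∃ v : ℤ × ℤ, IsSkewDiagram (translateD D v)

/-- `D` contains no 2 × 2 square of boxes. -/
def NoTwoByTwo (D : Finset (ℤ × ℤ)) : Prop :=
  ∀ p : ℤ × ℤ, ¬(p ∈ D ∧ (p.1 + 1, p.2) ∈ D ∧ (p.1, p.2 + 1) ∈ D ∧ (p.1 + 1, p.2 + 1) ∈ D)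

/-- A ribbon is a skew diagram (up to translation) containing no 2 × 2 square. -/
def IsRibbon (D : Finset (ℤ × ℤ)) : Prop := IsSkewShape D ∧ NoTwoByTwo D

/-- Two boxes share a common edge. -/
def AdjBox (p q : ℤ × ℤ) : Prop :=
  (p.1 = q.1 ∧ (p.2 = q.2 + 1 ∨ q.2 = p.2 + 1)) ∨
  (p.2 = q.2 ∧ (p.1 = q.1 + 1 ∨ q.1 = p.1 + 1))

/-- Any two boxes of `D` are joined by a chain of boxes of `D` sharing common edges. -/
def EdgeConnected (D : Finset (ℤ × ℤ)) : Prop :=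
  ∀ p ∈ D, ∀ q ∈ D, Relation.ReflTransGen (fun x y => x ∈ D ∧ y ∈ D ∧ AdjBox x y) p q

/-- The content set `c(D) = {j - i : (i,j) ∈ D}` of a diagram. -/
def contentSet (D : Finset (ℤ × ℤ)) : Finset ℤ := D.image fun p => p.2 - p.1

/-- `R'` is a subribbon of `R`: some diagonal translate of `R'` is contained in `R`
(diagonal translation preserves contents). -/
def IsSubribbon (R' R : Finset (ℤ × ℤ)) : Prop := ∃ t : ℤ, translateD R' (t, t) ⊆ R

/-- `θ` is an outside decomposition of the skew diagram `D`: the `θ i` are pairwise disjoint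
nonempty ribbons whose union is `D`, each having its starting box (the box of minimal
content) on the left or bottom perimeter and its ending box (the box of maximal content)
on the top or right perimeter of `D`. -/
def IsOutsideDecomp (D : Finset (ℤ × ℤ)) {n : ℕ} (θ : Fin n → Finset (ℤ × ℤ)) : Prop :=
  (∀ i, IsRibbon (θ i) ∧ (θ i).Nonempty) ∧
  (∀ i j, i ≠ j → Disjoint (θ i) (θ j)) ∧
  (D = Finset.univ.biUnion θ) ∧
  (∀ i, ∀ p ∈ θ i, (∀ q ∈ θ i, p.2 - p.1 ≤ q.2 - q.1) →
      ((p.1, p.2 - 1) ∉ D ∨ (p.1 + 1, p.2) ∉ D)) ∧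
  (∀ i, ∀ p ∈ θ i, (∀ q ∈ θ i, q.2 - q.1 ≤ p.2 - p.1) →
      ((p.1 - 1, p.2) ∉ D ∨ (p.1, p.2 + 1) ∉ D))

open scoped Classical in
/-- The generalized Schur sum `S_f^M(k)`: the sum over all semi-standard fillings `m` of `D`
with positive entries `< M` of `∏_{p ∈ D} f(m_p, k_p)`.  (For `D = ∅` this is `1`.) -/
noncomputable def SchurSum {A : Type*} [CommRing A] (f : ℕ → ℕ → A)
    (D : Finset (ℤ × ℤ)) (k : ℤ × ℤ → ℕ) (M : ℕ) : A :=
  ∑ m ∈ Finset.univ.filter (fun m : {x // x ∈ D} → Fin M =>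
      (∀ p, 1 ≤ (m p : ℕ)) ∧
      ∀ p q : {x // x ∈ D},
        ((q : ℤ × ℤ).1 = (p : ℤ × ℤ).1 + 1 ∧ (q : ℤ × ℤ).2 = (p : ℤ × ℤ).2 →
          (m p : ℕ) < (m q : ℕ)) ∧
        ((q : ℤ × ℤ).1 = (p : ℤ × ℤ).1 ∧ (q : ℤ × ℤ).2 = (p : ℤ × ℤ).2 + 1 →
          (m p : ℕ) ≤ (m q : ℕ))),
    ∏ p : {x // x ∈ D}, f (m p : ℕ) (k (p : ℤ × ℤ))

/-- The truncated Schur multiple zeta value `ζ_M(k)`. -/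
noncomputable def zetaTrunc (D : Finset (ℤ × ℤ)) (k : ℤ × ℤ → ℕ) (M : ℕ) : ℝ :=
  SchurSum (fun m d => ((m : ℝ) ^ d)⁻¹) D k M

/-- `Z ∈ ℝ[T]` is the (harmonic) regularization of the Schur multiple zeta value of the
tableau `k` on `D`:  `ζ_M(k) = Z(log M + γ) + O(log^J M / M)` as `M → ∞`. -/
def IsRegSchur (D : Finset (ℤ × ℤ)) (k : ℤ × ℤ → ℕ) (Z : Polynomial ℝ) : Prop :=
  ∃ (J : ℕ) (C : ℝ), 0 < C ∧ ∀ M : ℕ, 2 ≤ M →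
    |zetaTrunc D k M - Z.eval (Real.log M + Real.eulerMascheroniConstant)| ≤
      C * (Real.log M) ^ J / M

/-- `k` (given by its constant entries along diagonals) is admissible: every corner entry
is at least 2. -/
def Admissible (D : Finset (ℤ × ℤ)) (k : ℤ × ℤ → ℕ) : Prop :=
  ∀ p ∈ D, (p.1, p.2 + 1) ∉ D → (p.1 + 1, p.2) ∉ D → 2 ≤ k p

/-- Checkerboard style: every entry of the diagonal filling `kc` on `D` is `a` or `b`, and
boxes whose contents differ by `1` carry different entries. -/
def Checkerboard (D : Finset (ℤ × ℤ)) (kc : ℤ → ℕ) (a b : ℕ) : Prop :=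
  (∀ p ∈ D, kc (p.2 - p.1) = a ∨ kc (p.2 - p.1) = b) ∧
  ∀ p ∈ D, ∀ q ∈ D, q.2 - q.1 = p.2 - p.1 + 1 → kc (q.2 - q.1) ≠ kc (p.2 - p.1)

/-! ## Stairs -/

/-- The `A`-type stair with `2n+1` boxes: starting from its bottom-left box, `n` repetitions
of (one step right, one step up). -/
def stairA (n : ℕ) : Finset (ℤ × ℤ) :=
  ((Finset.range (n + 1)).image fun t : ℕ => (-(t : ℤ), (t : ℤ))) ∪
    ((Finset.range n).image fun t : ℕ => (-(t : ℤ), (t : ℤ) + 1))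

/-- The `B`-type stair with `2n+1` boxes: `n` repetitions of (one step up, one step right). -/
def stairB (n : ℕ) : Finset (ℤ × ℤ) :=
  ((Finset.range (n + 1)).image fun t : ℕ => (-(t : ℤ), (t : ℤ))) ∪
    ((Finset.range n).image fun t : ℕ => (-(t : ℤ) - 1, (t : ℤ)))

/-- The `S`-type stair with `2n` boxes: one step up followed by `n-1` repetitions of
(one step right, one step up). -/
def stairS (n : ℕ) : Finset (ℤ × ℤ) :=
  ((Finset.range n).image fun t : ℕ => (-(t : ℤ), (t : ℤ))) ∪
    ((Finset.range n).image fun t : ℕ => (-(t : ℤ) - 1, (t : ℤ)))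

/-- The `S⋆`-type stair with `2n` boxes: one step right followed by `n-1` repetitions of
(one step up, one step right). -/
def stairSstar (n : ℕ) : Finset (ℤ × ℤ) :=
  ((Finset.range n).image fun t : ℕ => (-(t : ℤ), (t : ℤ))) ∪
    ((Finset.range n).image fun t : ℕ => (-(t : ℤ), (t : ℤ) + 1))

/-- The alternating filling putting `a` on boxes of even content and `b` on boxes of odd
content (so along a stair starting at content `0` the entries read `a, b, a, b, …`). -/
def fillAB (a b : ℕ) (p : ℤ × ℤ) : ℕ := if (p.2 - p.1) % 2 = 0 then a else b

/-- The tableau `kc` (constant on diagonals) on `D` is tessellated purely by the stairs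
`stair n` (sizes `≥ lo`) with fillings `fill`: `D` is partitioned into translates of the
stairs, and on each piece the entries of `kc` coincide with the filling of the stair. -/
def Tessellates (D : Finset (ℤ × ℤ)) (kc : ℤ → ℕ)
    (stair : ℕ → Finset (ℤ × ℤ)) (fill : ℤ × ℤ → ℕ) (lo : ℕ) : Prop :=
  ∃ (N : ℕ) (sz : Fin N → ℕ) (off : Fin N → ℤ × ℤ),
    (∀ i, lo ≤ sz i) ∧
    (∀ i j, i ≠ j →
      Disjoint (translateD (stair (sz i)) (off i)) (translateD (stair (sz j)) (off j))) ∧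
    D = Finset.univ.biUnion (fun i => translateD (stair (sz i)) (off i)) ∧
    ∀ i, ∀ p ∈ stair (sz i), kc ((p.2 + (off i).2) - (p.1 + (off i).1)) = fill p

/-- The diagram of the gluing `G_{1,3}(n)` of a `B`-stair of size `n-1` on top of an
`A`-stair of size `n`. -/
def Gdiagram (n : ℕ) : Finset (ℤ × ℤ) :=
  translateD (stairA n) ((n : ℤ) + 1, 1) ∪ translateD (stairB (n - 1)) ((n : ℤ), 1)

/-- The checkerboard filling of `G_{1,3}(n)`: entry `1` on boxes whose content has the same
parity as `n`, entry `3` otherwise. -/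
def fillG (n : ℕ) (p : ℤ × ℤ) : ℕ := if (p.2 - p.1 - (n : ℤ)) % 2 = 0 then 1 else 3

/-! ## Multiple zeta values -/

/-- Auxiliary truncated multiple zeta sum: `Σ_{lb < m₁ < ⋯ < m_r < M} ∏ m_i^{-k_i}`. -/
noncomputable def mzvAux (M : ℕ) : ℕ → List ℕ → ℝ
  | _, [] => 1
  | lb, k :: ks => ∑ m ∈ Finset.Ioo lb M, ((m : ℝ) ^ k)⁻¹ * mzvAux M m ks

/-- The truncated multiple zeta value `ζ_M(k₁,…,k_r) = Σ_{0 < m₁ < ⋯ < m_r < M} ∏ m_i^{-k_i}`. -/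
noncomputable def mzvTrunc (ks : List ℕ) (M : ℕ) : ℝ := mzvAux M 0 ks

/-- Auxiliary truncated multiple zeta star sum: `Σ_{lb ≤ m₁ ≤ ⋯ ≤ m_r < M} ∏ m_i^{-k_i}`. -/
noncomputable def mzvStarAux (M : ℕ) : ℕ → List ℕ → ℝ
  | _, [] => 1
  | lb, k :: ks => ∑ m ∈ Finset.Ico lb M, ((m : ℝ) ^ k)⁻¹ * mzvStarAux M m ks

/-- The truncated multiple zeta star value
`ζ⋆_M(k₁,…,k_r) = Σ_{0 < m₁ ≤ ⋯ ≤ m_r < M} ∏ m_i^{-k_i}`. -/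
noncomputable def mzvStarTrunc (ks : List ℕ) (M : ℕ) : ℝ := mzvStarAux M 1 ks

/-- `Z ∈ ℝ[T]` is the harmonic (Ihara–Kaneko–Zagier) regularization of the multiple zeta
value of index `ks`. -/
def IsRegMZV (ks : List ℕ) (Z : Polynomial ℝ) : Prop :=
  ∃ (J : ℕ) (C : ℝ), 0 < C ∧ ∀ M : ℕ, 2 ≤ M →
    |mzvTrunc ks M - Z.eval (Real.log M + Real.eulerMascheroniConstant)| ≤
      C * (Real.log M) ^ J / M

/-- The Riemann zeta value `ζ(s) = Σ_{m ≥ 1} m^{-s}`. -/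
noncomputable def rzeta (s : ℕ) : ℝ := ∑' m : ℕ, (((m : ℝ) + 1) ^ s)⁻¹


/-!
Read along increasing content, a stair is a sequence of entries indexed by positions `t`: a step
right at even `t` (weak increase) and a step up at odd `t` (strict decrease). With `A` on positions
`[0, 2n]`, `B` on `[1, 2n - 1]`, `S` on `[1, 2n]` and `S⋆` on `[0, 2n - 1]` (entry `0` elsewhere),
every tableau has entry `1` at even and `3` at odd positions, and a filling of `G_{1,3}(n)` is a
pair in `A × B` satisfying the gluing conditions.

This is a Lindström–Gessel–Viennot argument. Call `r` a crossing of a pair of sequences when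
their heads (the entries at positions `≤ r`) can be exchanged. Starting from the entry `0` at
position `0`, one sequence of a pair without crossing stays below the other at every position: for
pairs in `A × B` this is equivalent to the gluing conditions, for pairs in `S × S⋆` it fails at
position `2n`. Exchanging the heads at the last crossing is therefore a weight-preserving bijection
between the crossing pairs of `A × B` and `S × S⋆`, so `ζ_M(A) ζ_M(B) = ζ_M(G) + ζ_M(S) ζ_M(S⋆)`
for every truncation `M`, and the theorem follows in the limit.
-/

namespace GluedStair

open Finset

def ZigzagStep (t x y : ℕ) : Prop := if t % 2 = 0 then x ≤ y else y < x

instance (t x y : ℕ) : Decidable (ZigzagStep t x y) := by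
  unfold ZigzagStep; infer_instance

def IsZigzag (N : ℕ) (f : ℕ → ℕ) : Prop := ∀ t < N, ZigzagStep t (f t) (f (t + 1))

def Cross (r : ℕ) (p : (ℕ → ℕ) × (ℕ → ℕ)) : Prop :=
  ZigzagStep r (p.1 r) (p.2 (r + 1)) ∧ ZigzagStep r (p.2 r) (p.1 (r + 1))

instance (r : ℕ) (p : (ℕ → ℕ) × (ℕ → ℕ)) : Decidable (Cross r p) := by
  unfold Cross; infer_instance

def Glued (r : ℕ) (p : (ℕ → ℕ) × (ℕ → ℕ)) : Prop :=
  if r % 2 = 0 then p.2 (r + 1) < p.1 r else p.2 r ≤ p.1 (r + 1)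

instance (r : ℕ) (p : (ℕ → ℕ) × (ℕ → ℕ)) : Decidable (Glued r p) := by
  unfold Glued; infer_instance

section Crossing

variable {N r : ℕ} {p : (ℕ → ℕ) × (ℕ → ℕ)}

theorem Glued.not_cross (h : Glued r p) : ¬Cross r p := by
  unfold Glued at h
  unfold Cross ZigzagStep
  split_ifs at h ⊢ <;> omega

theorem glued_of_not_cross (h₁ : ZigzagStep r (p.1 r) (p.1 (r + 1)))
    (h₂ : ZigzagStep r (p.2 r) (p.2 (r + 1))) (hlt : p.2 r < p.1 r) (hc : ¬Cross r p) :
    Glued r p := by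
  unfold Cross ZigzagStep at *
  unfold Glued
  split_ifs at * <;> omega

theorem Glued.lt_succ (h₁ : ZigzagStep r (p.1 r) (p.1 (r + 1)))
    (h₂ : ZigzagStep r (p.2 r) (p.2 (r + 1))) (h : Glued r p) : p.2 (r + 1) < p.1 (r + 1) := by
  unfold ZigzagStep at *
  unfold Glued at h
  split_ifs at * <;> omega

theorem lt_of_forall_not_cross (h₁ : IsZigzag N p.1) (h₂ : IsZigzag N p.2) (h₀ : p.2 0 < p.1 0)
    (hc : ∀ r < N, ¬Cross r p) : ∀ t ≤ N, p.2 t < p.1 t := by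
  intro t ht
  induction t with
  | zero => exact h₀
  | succ t ih =>
    have hs₁ := h₁ t (by omega)
    have hs₂ := h₂ t (by omega)
    exact (glued_of_not_cross hs₁ hs₂ (ih (by omega)) (hc t (by omega))).lt_succ hs₁ hs₂

theorem forall_glued_iff_forall_not_cross (h₁ : IsZigzag N p.1) (h₂ : IsZigzag N p.2)
    (h₀ : p.2 0 < p.1 0) : (∀ r < N, Glued r p) ↔ ∀ r < N, ¬Cross r p :=
  ⟨fun h r hr => (h r hr).not_cross, fun hc r hr =>
    glued_of_not_cross (h₁ r hr) (h₂ r hr) (lt_of_forall_not_cross h₁ h₂ h₀ hc r hr.le) (hc r hr)⟩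

theorem exists_cross (h₁ : IsZigzag N p.1) (h₂ : IsZigzag N p.2) (h₀ : p.2 0 < p.1 0)
    (hN : p.1 N ≤ p.2 N) : ∃ r < N, Cross r p := by
  by_contra! hc
  exact (lt_of_forall_not_cross h₁ h₂ h₀ hc N le_rfl).not_ge hN

end Crossing

def splice (r : ℕ) (f g : ℕ → ℕ) (t : ℕ) : ℕ := if t ≤ r then f t else g t

def swapHeads (r : ℕ) (p : (ℕ → ℕ) × (ℕ → ℕ)) : (ℕ → ℕ) × (ℕ → ℕ) :=
  (splice r p.2 p.1, splice r p.1 p.2)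

def lastCross (N : ℕ) (p : (ℕ → ℕ) × (ℕ → ℕ)) : ℕ := Nat.findGreatest (fun r => Cross r p) N

def swapAtLastCross (N : ℕ) (p : (ℕ → ℕ) × (ℕ → ℕ)) : (ℕ → ℕ) × (ℕ → ℕ) :=
  swapHeads (lastCross N p) p

def weight {R : Type*} [CommMonoid R] (w : ℕ → ℕ → R) (s : Finset ℕ) (f : ℕ → ℕ) : R :=
  ∏ t ∈ s, w t (f t)

section Swap

variable {N r : ℕ} {p : (ℕ → ℕ) × (ℕ → ℕ)}

theorem swapHeads_swapHeads (r : ℕ) (p : (ℕ → ℕ) × (ℕ → ℕ)) :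
    swapHeads r (swapHeads r p) = p := by
  ext t <;> simp only [swapHeads, splice] <;> split_ifs <;> rfl

theorem cross_swapHeads_iff_of_lt {r' : ℕ} (h : r < r') :
    Cross r' (swapHeads r p) ↔ Cross r' p := by
  simp only [Cross, swapHeads, splice, if_neg (show ¬r' ≤ r by omega),
    if_neg (show ¬r' + 1 ≤ r by omega)]

theorem cross_swapHeads_self (h₁ : ZigzagStep r (p.1 r) (p.1 (r + 1)))
    (h₂ : ZigzagStep r (p.2 r) (p.2 (r + 1))) : Cross r (swapHeads r p) := by
  simp only [Cross, swapHeads, splice, le_refl, if_true, if_neg (show ¬r + 1 ≤ r by omega)]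
  exact ⟨h₂, h₁⟩

theorem weight_mul_weight_swapHeads {R : Type*} [CommMonoid R] (w : ℕ → ℕ → R)
    (s : Finset ℕ) :
    weight w s (swapHeads r p).1 * weight w s (swapHeads r p).2 =
      weight w s p.1 * weight w s p.2 := by
  simp only [weight, ← prod_mul_distrib, swapHeads, splice]
  refine prod_congr rfl fun t _ => ?_
  split_ifs
  exacts [mul_comm _ _, rfl]

theorem lastCross_le : lastCross N p ≤ N := Nat.findGreatest_le N

theorem cross_lastCross (h : ∃ r ≤ N, Cross r p) : Cross (lastCross N p) p := by
  obtain ⟨r, hr, hc⟩ := h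
  exact Nat.findGreatest_spec (P := fun r => Cross r p) hr hc

theorem lastCross_swapHeads (h₁ : IsZigzag (N + 1) p.1) (h₂ : IsZigzag (N + 1) p.2) :
    lastCross N (swapHeads (lastCross N p) p) = lastCross N p := by
  have hR : lastCross N p < N + 1 := Nat.lt_succ_of_le lastCross_le
  refine Nat.findGreatest_eq_iff.2 ⟨lastCross_le,
    fun _ => cross_swapHeads_self (h₁ _ hR) (h₂ _ hR), fun r' hr' hr'N => ?_⟩
  rw [cross_swapHeads_iff_of_lt hr']
  exact Nat.findGreatest_is_greatest hr' hr'N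

theorem swapAtLastCross_swapAtLastCross (h₁ : IsZigzag (N + 1) p.1)
    (h₂ : IsZigzag (N + 1) p.2) : swapAtLastCross N (swapAtLastCross N p) = p := by
  rw [swapAtLastCross, swapAtLastCross, lastCross_swapHeads h₁ h₂, swapHeads_swapHeads]

end Swap

def IsFilling {X : Type*} (M : ℕ) (I : Finset X) (F : X → ℕ) : Prop :=
  (∀ x ∉ I, F x = 0) ∧ ∀ x ∈ I, 1 ≤ F x ∧ F x < M

def IsChain (M lo hi : ℕ) (f : ℕ → ℕ) : Prop :=
  IsFilling M (Icc lo hi) f ∧ ∀ t ∈ Ico lo hi, ZigzagStep t (f t) (f (t + 1))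

open Classical in
noncomputable def chains (M lo hi : ℕ) : Finset (ℕ → ℕ) :=
  ((Fintype.piFinset fun _ : Fin (hi + 1) => range (M + 1)).image
    fun v t => if h : t < hi + 1 then v ⟨t, h⟩ else 0).filter (IsChain M lo hi)

section Chains

variable {M lo hi lo₁ hi₁ lo₂ hi₂ N r : ℕ} {f g : ℕ → ℕ}

theorem mem_chains : f ∈ chains M lo hi ↔ IsChain M lo hi f := by
  classical
  simp only [chains, mem_filter, mem_image, Fintype.mem_piFinset, mem_range]
  refine ⟨And.right, fun hf => ⟨⟨fun i => f i, fun i => ?_, ?_⟩, hf⟩⟩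
  · show f i < M + 1
    by_cases hmem : (i : ℕ) ∈ Icc lo hi
    · exact Nat.lt_succ_of_lt (hf.1.2 _ hmem).2
    · rw [hf.1.1 _ hmem]
      omega
  · funext t
    split_ifs with ht
    · rfl
    · exact (hf.1.1 t (by simp only [mem_Icc]; omega)).symm

/-- The zero entries just outside a chain satisfy the zigzag condition at an even first and an odd
last step. -/
theorem IsChain.isZigzag (hf : IsChain M lo hi f) (hlo : lo ≤ 1) (hN : N ≤ hi + 1)
    (hhi : N ≤ hi ∨ hi % 2 = 1) : IsZigzag N f := by
  obtain ⟨⟨hout, hin⟩, hstep⟩ := hf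
  intro t ht
  by_cases hmem : t ∈ Ico lo hi
  · exact hstep t hmem
  simp only [mem_Ico, not_and_or, not_le, not_lt] at hmem
  unfold ZigzagStep
  rcases hmem with hlt | hge
  · have h0 : f t = 0 := hout t (by simp only [mem_Icc]; omega)
    split_ifs <;> omega
  · have h0 : f (t + 1) = 0 := hout _ (by simp only [mem_Icc]; omega)
    have hpos := (hin t (by simp only [mem_Icc]; omega)).1
    split_ifs <;> omega

theorem IsChain.splice (hf : IsChain M lo₁ hi₁ f) (hg : IsChain M lo₂ hi₂ g)
    (hr : ZigzagStep r (f r) (g (r + 1))) (hr₁ : r ≤ hi₁) (hr₂ : r ≤ hi₂) (hlo₁ : lo₁ ≤ r + 1)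
    (hlo₂ : lo₂ ≤ r + 1) : IsChain M lo₁ hi₂ (splice r f g) := by
  obtain ⟨⟨hf₀, hf₁⟩, hfs⟩ := hf
  obtain ⟨⟨hg₀, hg₁⟩, hgs⟩ := hg
  refine ⟨⟨fun t ht => ?_, fun t ht => ?_⟩, fun t ht => ?_⟩ <;>
    simp only [mem_Icc, mem_Ico] at * <;> unfold GluedStair.splice
  · split_ifs
    exacts [hf₀ t (by omega), hg₀ t (by omega)]
  · split_ifs
    exacts [hf₁ t (by omega), hg₁ t (by omega)]
  · rcases lt_trichotomy t r with htr | rfl | htr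
    · rw [if_pos htr.le, if_pos (Nat.succ_le_of_lt htr)]
      exact hfs t (by omega)
    · rwa [if_pos le_rfl, if_neg (by omega)]
    · rw [if_neg (by omega), if_neg (by omega)]
      exact hgs t (by omega)

end Chains

noncomputable def gluedPairs (M n : ℕ) : Finset ((ℕ → ℕ) × (ℕ → ℕ)) :=
  (chains M 0 (2 * n) ×ˢ chains M 1 (2 * n - 1)).filter fun p => ∀ r < 2 * n, Glued r p

section LGV

variable {R : Type*} [CommSemiring R] {M n : ℕ}

theorem exists_cross_iff_not_glued (hn : 1 ≤ n) {p : (ℕ → ℕ) × (ℕ → ℕ)}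
    (hp : p ∈ chains M 0 (2 * n) ×ˢ chains M 1 (2 * n - 1)) :
    (∃ r ≤ 2 * n - 1, Cross r p) ↔ ¬∀ r < 2 * n, Glued r p := by
  obtain ⟨h₁, h₂⟩ := mem_product.1 hp
  have h₁ := mem_chains.1 h₁
  have h₂ := mem_chains.1 h₂
  have hlt : p.2 0 < p.1 0 := by
    rw [h₂.1.1 0 (by simp)]
    exact (h₁.1.2 0 (by simp)).1
  rw [forall_glued_iff_forall_not_cross (h₁.isZigzag zero_le_one (by omega) (by omega))
    (h₂.isZigzag le_rfl (by omega) (by omega)) hlt]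
  simp only [not_forall, not_not, exists_prop]
  exact exists_congr fun r => and_congr_left' (by omega)

theorem exists_cross_of_mem_chains_prod (hn : 1 ≤ n) {q : (ℕ → ℕ) × (ℕ → ℕ)}
    (hq : q ∈ chains M 1 (2 * n) ×ˢ chains M 0 (2 * n - 1)) : ∃ r ≤ 2 * n - 1, Cross r q := by
  obtain ⟨h₁, h₂⟩ := mem_product.1 hq
  have h₁ := mem_chains.1 h₁
  have h₂ := mem_chains.1 h₂
  obtain ⟨r, hr, hc⟩ := exists_cross (p := q.swap) (N := 2 * n)
    (h₂.isZigzag zero_le_one (by omega) (by omega)) (h₁.isZigzag le_rfl (by omega) (by omega))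
    (by rw [Prod.snd_swap, Prod.fst_swap, h₁.1.1 0 (by simp)]; exact (h₂.1.2 0 (by simp)).1)
    (by rw [Prod.snd_swap, Prod.fst_swap, h₂.1.1 _ (by simp; omega)]; exact Nat.zero_le _)
  exact ⟨r, by omega, hc.symm⟩

theorem swapAtLastCross_mem_product {N lo₁ hi₁ lo₂ hi₂ : ℕ} {p : (ℕ → ℕ) × (ℕ → ℕ)}
    (hp : p ∈ chains M lo₁ hi₁ ×ˢ chains M lo₂ hi₂) (hlo : lo₁ ≤ 1 ∧ lo₂ ≤ 1)
    (hhi : N ≤ hi₁ ∧ N ≤ hi₂) (hc : ∃ r ≤ N, Cross r p) :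
    swapAtLastCross N p ∈ chains M lo₂ hi₁ ×ˢ chains M lo₁ hi₂ := by
  obtain ⟨h₁, h₂⟩ := mem_product.1 hp
  have hR := lastCross_le (N := N) (p := p)
  have hcross := cross_lastCross hc
  exact mem_product.2 ⟨mem_chains.2 ((mem_chains.1 h₂).splice (mem_chains.1 h₁) hcross.2
    (by omega) (by omega) (by omega) (by omega)), mem_chains.2 ((mem_chains.1 h₁).splice
    (mem_chains.1 h₂) hcross.1 (by omega) (by omega) (by omega) (by omega))⟩

theorem sum_not_glued_eq (hn : 1 ≤ n) (w : ℕ → ℕ → R) (s : Finset ℕ) :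
    ∑ p ∈ (chains M 0 (2 * n) ×ˢ chains M 1 (2 * n - 1)).filter (fun p => ¬∀ r < 2 * n, Glued r p),
      weight w s p.1 * weight w s p.2 =
    ∑ q ∈ chains M 1 (2 * n) ×ˢ chains M 0 (2 * n - 1), weight w s q.1 * weight w s q.2 := by
  have zigzag : ∀ {lo hi} {f}, f ∈ chains M lo hi → lo ≤ 1 → 2 * n - 1 ≤ hi →
      IsZigzag (2 * n - 1 + 1) f :=
    fun hf hlo hhi => (mem_chains.1 hf).isZigzag hlo (by omega) (by omega)
  refine sum_nbij' (swapAtLastCross (2 * n - 1)) (swapAtLastCross (2 * n - 1)) (fun p hp => ?_)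
    (fun q hq => ?_) (fun p hp => ?_) (fun q hq => ?_)
    (fun p _ => (weight_mul_weight_swapHeads w s).symm)
  · obtain ⟨hp, hg⟩ := mem_filter.1 hp
    exact swapAtLastCross_mem_product hp (by omega) (by omega)
      ((exists_cross_iff_not_glued hn hp).2 hg)
  · have hmem := swapAtLastCross_mem_product hq (by omega) (by omega)
      (exists_cross_of_mem_chains_prod hn hq)
    obtain ⟨h₁, h₂⟩ := mem_product.1 hq
    have hR := Nat.lt_succ_of_le (lastCross_le (N := 2 * n - 1) (p := q))
    refine mem_filter.2 ⟨hmem, (exists_cross_iff_not_glued hn hmem).1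
      ⟨lastCross (2 * n - 1) q, lastCross_le, ?_⟩⟩
    exact cross_swapHeads_self (zigzag h₁ le_rfl (by omega) _ hR)
      (zigzag h₂ (by omega) (by omega) _ hR)
  · obtain ⟨h₁, h₂⟩ := mem_product.1 (mem_filter.1 hp).1
    exact swapAtLastCross_swapAtLastCross (zigzag h₁ (by omega) (by omega))
      (zigzag h₂ le_rfl le_rfl)
  · obtain ⟨h₁, h₂⟩ := mem_product.1 hq
    exact swapAtLastCross_swapAtLastCross (zigzag h₁ le_rfl (by omega))
      (zigzag h₂ (by omega) le_rfl)

theorem sum_mul_sum_eq_sum_gluedPairs_add (hn : 1 ≤ n) (w : ℕ → ℕ → R) (s : Finset ℕ) :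
    (∑ a ∈ chains M 0 (2 * n), weight w s a) * ∑ b ∈ chains M 1 (2 * n - 1), weight w s b =
      ∑ p ∈ gluedPairs M n, weight w s p.1 * weight w s p.2 +
        (∑ f ∈ chains M 1 (2 * n), weight w s f) * ∑ g ∈ chains M 0 (2 * n - 1), weight w s g := by
  rw [sum_mul_sum, sum_mul_sum, ← sum_product', ← sum_product', gluedPairs,
    ← sum_not_glued_eq hn, sum_filter_add_sum_filter_not]

end LGV

def IsSemistandardAcross {X Y : Type*} (e : X → ℤ × ℤ) (e' : Y → ℤ × ℤ) (I : Finset X)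
    (J : Finset Y) (F : X → ℕ) (G : Y → ℕ) : Prop :=
  ∀ x ∈ I, ∀ y ∈ J, ((e' y).1 = (e x).1 + 1 ∧ (e' y).2 = (e x).2 → F x < G y) ∧
    ((e' y).1 = (e x).1 ∧ (e' y).2 = (e x).2 + 1 → F x ≤ G y)

section Fillings

variable {X Y : Type*} {M : ℕ}

theorem schurSum_image_eq_sum {A : Type*} [CommRing A] (f : ℕ → ℕ → A) (k : ℤ × ℤ → ℕ)
    (M : ℕ) {I : Finset X} {e : X → ℤ × ℤ} (he : Set.InjOn e I) {S : Finset (X → ℕ)}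
    (hS : ∀ F, F ∈ S ↔ IsFilling M I F ∧ IsSemistandardAcross e e I I F F) :
    SchurSum f (I.image e) k M = ∑ F ∈ S, ∏ x ∈ I, f (F x) (k (e x)) := by
  classical
  have hbij : Function.Bijective fun x : I => (⟨e x, mem_image_of_mem e x.2⟩ : I.image e) :=
    ⟨fun x y h => Subtype.ext (he x.2 y.2 (congrArg Subtype.val h)), fun p => by
      obtain ⟨x, hx, hxp⟩ := mem_image.1 p.2
      exact ⟨⟨x, hx⟩, Subtype.ext hxp⟩⟩
  set E := Equiv.ofBijective _ hbij
  have hE : ∀ p, e (E.symm p) = p := fun p => congrArg Subtype.val (E.apply_symm_apply p)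
  unfold SchurSum
  refine sum_bij' (fun m _ x => if h : x ∈ I then (m (E ⟨x, h⟩) : ℕ) else 0)
    (fun F hF p => ⟨F (E.symm p), (((hS F).1 hF).1.2 _ (E.symm p).2).2⟩)
    (fun m hm => ?_) (fun F hF => ?_) (fun m _ => ?_) (fun F hF => ?_) (fun m _ => ?_)
  · obtain ⟨hpos, hss⟩ := (mem_filter.1 hm).2
    refine (hS _).2 ⟨⟨fun x hx => dif_neg hx, fun x hx => ?_⟩, fun x hx y hy => ?_⟩
    · simp only [dif_pos hx]
      exact ⟨hpos _, (m _).2⟩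
    · simp only [dif_pos hx, dif_pos hy]
      exact hss (E ⟨x, hx⟩) (E ⟨y, hy⟩)
  · obtain ⟨⟨-, hpos⟩, hss⟩ := (hS F).1 hF
    refine mem_filter.2 ⟨mem_univ _, fun p => (hpos _ (E.symm p).2).1, fun p q => ?_⟩
    have h := hss _ (E.symm p).2 _ (E.symm q).2
    rwa [hE, hE] at h
  · funext p
    refine Fin.ext ?_
    simp only [dif_pos (E.symm p).2, Subtype.coe_eta, Equiv.apply_symm_apply]
  · funext x
    by_cases hx : x ∈ I
    · simp only [dif_pos hx, Equiv.symm_apply_apply]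
    · rw [dif_neg hx, (((hS F).1 hF).1.1 x hx)]
  · rw [← E.prod_comp, ← prod_coe_sort I]
    refine prod_congr rfl fun x _ => ?_
    simp only [dif_pos x.2]
    rfl

theorem isFilling_disjSum {I : Finset X} {J : Finset Y} {F : X ⊕ Y → ℕ} :
    IsFilling M (I.disjSum J) F ↔ IsFilling M I (F ∘ Sum.inl) ∧ IsFilling M J (F ∘ Sum.inr) := by
  simp only [IsFilling, Sum.forall, inl_mem_disjSum, inr_mem_disjSum, Function.comp]
  tauto

theorem isSemistandardAcross_disjSum {I : Finset X} {J : Finset Y} {e₁ : X → ℤ × ℤ}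
    {e₂ : Y → ℤ × ℤ} {F : X ⊕ Y → ℕ} :
    IsSemistandardAcross (Sum.elim e₁ e₂) (Sum.elim e₁ e₂) (I.disjSum J) (I.disjSum J) F F ↔
      IsSemistandardAcross e₁ e₁ I I (F ∘ Sum.inl) (F ∘ Sum.inl) ∧
      IsSemistandardAcross e₁ e₂ I J (F ∘ Sum.inl) (F ∘ Sum.inr) ∧
      IsSemistandardAcross e₂ e₁ J I (F ∘ Sum.inr) (F ∘ Sum.inl) ∧
      IsSemistandardAcross e₂ e₂ J J (F ∘ Sum.inr) (F ∘ Sum.inr) := by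
  simp only [IsSemistandardAcross, Sum.forall, inl_mem_disjSum, inr_mem_disjSum, Sum.elim_inl,
    Sum.elim_inr, Function.comp, imp_and, forall_and]
  tauto

end Fillings

/-- The box at position `t` of the stair whose position `0` is the box `(r₀, c₀)`; its content
is `c₀ - r₀ + t`. -/
def box (r₀ c₀ : ℤ) (t : ℕ) : ℤ × ℤ := (r₀ - (t / 2 : ℕ), c₀ + ((t + 1) / 2 : ℕ))

def stairExponent (t : ℕ) : ℕ := if t % 2 = 0 then 1 else 3

/-- The entry `0` off a chain contributes the factor `1`. -/
noncomputable def entryWeight (t m : ℕ) : ℝ :=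
  if m = 0 then 1 else ((m : ℝ) ^ stairExponent t)⁻¹

section Boxes

variable {r₀ c₀ : ℤ} {M lo hi : ℕ}

theorem box_injective (r₀ c₀ : ℤ) : Function.Injective (box r₀ c₀) := by
  intro t t' h
  simp only [box, Prod.mk.injEq] at h
  omega

theorem translateD_image_box (s : Finset ℕ) (v : ℤ × ℤ) :
    translateD (s.image (box r₀ c₀)) v = s.image (box (r₀ + v.1) (c₀ + v.2)) := by
  rw [translateD, image_image]
  congr 1
  funext t
  simp only [Function.comp, box, Prod.mk.injEq]
  constructor <;> ring

theorem isSemistandardAcross_box_iff {f : ℕ → ℕ} :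
    IsSemistandardAcross (box r₀ c₀) (box r₀ c₀) (Icc lo hi) (Icc lo hi) f f ↔
      ∀ t ∈ Ico lo hi, ZigzagStep t (f t) (f (t + 1)) := by
  simp only [IsSemistandardAcross, box, mem_Icc, mem_Ico, ZigzagStep]
  constructor
  · intro h t ht
    split_ifs with ht₂
    · exact (h t (by omega) (t + 1) (by omega)).2 ⟨by omega, by omega⟩
    · exact (h (t + 1) (by omega) t (by omega)).1 ⟨by omega, by omega⟩
  · intro h x hx y hy
    constructor
    · rintro ⟨h₁, h₂⟩
      obtain rfl : x = y + 1 := by omega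
      have := h y (by omega)
      rwa [if_neg (by omega)] at this
    · rintro ⟨h₁, h₂⟩
      obtain rfl : y = x + 1 := by omega
      have := h x (by omega)
      rwa [if_pos (by omega)] at this

theorem isSemistandardAcross_box_succ_iff {n : ℕ} {f g : ℕ → ℕ} :
    IsSemistandardAcross (box r₀ c₀) (box (r₀ + 1) (c₀ + 1)) (Icc 1 (2 * n - 1)) (Icc 0 (2 * n))
      g f ↔ ∀ r < 2 * n, Glued r (f, g) := by
  simp only [IsSemistandardAcross, box, mem_Icc, Glued]
  constructor
  · intro h r hr
    split_ifs with hr₂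
    · exact (h (r + 1) (by omega) r (by omega)).1 ⟨by omega, by omega⟩
    · exact (h r (by omega) (r + 1) (by omega)).2 ⟨by omega, by omega⟩
  · intro h x hx y hy
    constructor
    · rintro ⟨h₁, h₂⟩
      obtain rfl : x = y + 1 := by omega
      have := h y (by omega)
      rwa [if_pos (by omega)] at this
    · rintro ⟨h₁, h₂⟩
      obtain rfl : y = x + 1 := by omega
      have := h x (by omega)
      rwa [if_neg (by omega)] at this

theorem isSemistandardAcross_box_succ_box (I J : Finset ℕ) (f g : ℕ → ℕ) :
    IsSemistandardAcross (box (r₀ + 1) (c₀ + 1)) (box r₀ c₀) I J f g := by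
  intro x _ y _
  simp only [box]
  constructor <;> rintro ⟨h₁, h₂⟩ <;> omega

theorem IsFilling.prod_eq_weight {I s : Finset ℕ} {f : ℕ → ℕ} (hf : IsFilling M I f)
    (hI : I ⊆ s) : ∏ t ∈ I, ((f t : ℝ) ^ stairExponent t)⁻¹ = weight entryWeight s f := by
  rw [weight, ← prod_subset hI fun t _ ht => by rw [entryWeight, if_pos (hf.1 t ht)]]
  refine prod_congr rfl fun t ht => ?_
  rw [entryWeight, if_neg (by have := (hf.2 t ht).1; omega)]

theorem zetaTrunc_image_box {N : ℕ} {k : ℤ × ℤ → ℕ}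
    (hk : ∀ t ∈ Icc lo hi, k (box r₀ c₀ t) = stairExponent t) (hN : hi < N) (M : ℕ) :
    zetaTrunc ((Icc lo hi).image (box r₀ c₀)) k M =
      ∑ f ∈ chains M lo hi, weight entryWeight (range N) f := by
  unfold zetaTrunc
  rw [schurSum_image_eq_sum _ k M (box_injective r₀ c₀).injOn fun F => by
    rw [mem_chains, IsChain, isSemistandardAcross_box_iff]]
  refine sum_congr rfl fun f hf => ?_
  rw [← (mem_chains.1 hf).1.prod_eq_weight fun t ht => mem_range.2 ((mem_Icc.1 ht).2.trans_lt hN)]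
  exact prod_congr rfl fun t ht => by rw [hk t ht]

end Boxes

theorem stairA_eq (n : ℕ) : stairA n = (Icc 0 (2 * n)).image (box 0 0) := by
  ext ⟨i, j⟩
  simp only [stairA, box, mem_union, mem_image, mem_range, mem_Icc, Prod.mk.injEq]
  constructor
  · rintro (⟨t, ht, rfl, rfl⟩ | ⟨t, ht, rfl, rfl⟩)
    exacts [⟨2 * t, by omega, by omega, by omega⟩, ⟨2 * t + 1, by omega, by omega, by omega⟩]
  · rintro ⟨t, ht, rfl, rfl⟩
    rcases Nat.even_or_odd' t with ⟨u, rfl | rfl⟩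
    exacts [Or.inl ⟨u, by omega, by omega, by omega⟩, Or.inr ⟨u, by omega, by omega, by omega⟩]

theorem stairB_eq (m : ℕ) : stairB m = (Icc 1 (2 * m + 1)).image (box 0 (-1)) := by
  ext ⟨i, j⟩
  simp only [stairB, box, mem_union, mem_image, mem_range, mem_Icc, Prod.mk.injEq]
  constructor
  · rintro (⟨t, ht, rfl, rfl⟩ | ⟨t, ht, rfl, rfl⟩)
    exacts [⟨2 * t + 1, by omega, by omega, by omega⟩, ⟨2 * t + 2, by omega, by omega, by omega⟩]
  · rintro ⟨t, ht, rfl, rfl⟩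
    rcases Nat.even_or_odd' t with ⟨u, rfl | rfl⟩
    exacts [Or.inr ⟨u - 1, by omega, by omega, by omega⟩, Or.inl ⟨u, by omega, by omega, by omega⟩]

theorem stairS_eq (n : ℕ) : stairS n = (Icc 1 (2 * n)).image (box 0 (-1)) := by
  ext ⟨i, j⟩
  simp only [stairS, box, mem_union, mem_image, mem_range, mem_Icc, Prod.mk.injEq]
  constructor
  · rintro (⟨t, ht, rfl, rfl⟩ | ⟨t, ht, rfl, rfl⟩)
    exacts [⟨2 * t + 1, by omega, by omega, by omega⟩, ⟨2 * t + 2, by omega, by omega, by omega⟩]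
  · rintro ⟨t, ht, rfl, rfl⟩
    rcases Nat.even_or_odd' t with ⟨u, rfl | rfl⟩
    exacts [Or.inr ⟨u - 1, by omega, by omega, by omega⟩, Or.inl ⟨u, by omega, by omega, by omega⟩]

theorem stairSstar_eq {n : ℕ} (hn : 1 ≤ n) :
    stairSstar n = (Icc 0 (2 * n - 1)).image (box 0 0) := by
  ext ⟨i, j⟩
  simp only [stairSstar, box, mem_union, mem_image, mem_range, mem_Icc, Prod.mk.injEq]
  constructor
  · rintro (⟨t, ht, rfl, rfl⟩ | ⟨t, ht, rfl, rfl⟩)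
    exacts [⟨2 * t, by omega, by omega, by omega⟩, ⟨2 * t + 1, by omega, by omega, by omega⟩]
  · rintro ⟨t, ht, rfl, rfl⟩
    rcases Nat.even_or_odd' t with ⟨u, rfl | rfl⟩
    exacts [Or.inl ⟨u, by omega, by omega, by omega⟩, Or.inr ⟨u, by omega, by omega, by omega⟩]

theorem Gdiagram_eq {n : ℕ} (hn : 1 ≤ n) :
    Gdiagram n = ((Icc 0 (2 * n)).disjSum (Icc 1 (2 * n - 1))).image
      (Sum.elim (box ((n : ℤ) + 1) 1) (box n 0)) := by
  rw [Gdiagram, stairA_eq, stairB_eq, translateD_image_box, translateD_image_box,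
    show 2 * (n - 1) + 1 = 2 * n - 1 by omega]
  ext p
  simp only [mem_union, mem_image, Sum.exists, inl_mem_disjSum, inr_mem_disjSum, Sum.elim_inl,
    Sum.elim_inr]
  norm_num

theorem fillAB_one_three_box (t : ℕ) : fillAB 1 3 (box 0 0 t) = stairExponent t :=
  if_congr (by simp only [box]; omega) rfl rfl

theorem fillAB_three_one_box (t : ℕ) : fillAB 3 1 (box 0 (-1) t) = stairExponent t := by
  rw [stairExponent, ← ite_not]
  exact if_congr (by simp only [box]; omega) rfl rfl

theorem fillG_box_succ (n t : ℕ) : fillG n (box ((n : ℤ) + 1) 1 t) = stairExponent t :=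
  if_congr (by simp only [box]; omega) rfl rfl

theorem fillG_box (n t : ℕ) : fillG n (box n 0 t) = stairExponent t :=
  if_congr (by simp only [box]; omega) rfl rfl

theorem zetaTrunc_Gdiagram {n : ℕ} (hn : 1 ≤ n) (M : ℕ) :
    zetaTrunc (Gdiagram n) (fillG n) M = ∑ p ∈ gluedPairs M n,
      weight entryWeight (range (2 * n + 1)) p.1 * weight entryWeight (range (2 * n + 1)) p.2 := by
  have he : Function.Injective (Sum.elim (box ((n : ℤ) + 1) 1) (box n 0)) :=
    (box_injective _ _).sumElim (box_injective _ _) fun t t' h => by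
      simp only [box, Prod.mk.injEq] at h
      omega
  have hrange : ∀ {lo hi}, hi ≤ 2 * n → Icc lo hi ⊆ range (2 * n + 1) :=
    fun hhi t ht => mem_range.2 (by simp only [mem_Icc] at ht; omega)
  rw [Gdiagram_eq hn]
  unfold zetaTrunc
  rw [schurSum_image_eq_sum (S := (gluedPairs M n).map
    (Equiv.sumArrowEquivProdArrow ℕ ℕ ℕ).symm.toEmbedding) _ _ M he.injOn fun F => ?_, sum_map]
  · refine sum_congr rfl fun p hp => ?_
    obtain ⟨h₁, h₂⟩ := mem_product.1 (mem_filter.1 hp).1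
    rw [prod_disjSum]
    simp only [Equiv.coe_toEmbedding, Sum.elim_inl, Sum.elim_inr, fillG_box_succ, fillG_box]
    exact congrArg₂ (· * ·) ((mem_chains.1 h₁).1.prod_eq_weight (hrange le_rfl))
      ((mem_chains.1 h₂).1.prod_eq_weight (hrange (Nat.sub_le _ _)))
  · have hglued := isSemistandardAcross_box_succ_iff (r₀ := n) (c₀ := 0) (n := n)
      (f := F ∘ Sum.inl) (g := F ∘ Sum.inr)
    have hvac := isSemistandardAcross_box_succ_box (r₀ := n) (c₀ := 0) (Icc 0 (2 * n))
      (Icc 1 (2 * n - 1)) (F ∘ Sum.inl) (F ∘ Sum.inr)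
    rw [zero_add] at hglued hvac
    rw [mem_map_equiv, Equiv.symm_symm, gluedPairs, mem_filter, mem_product, mem_chains,
      mem_chains, isFilling_disjSum, isSemistandardAcross_disjSum, IsChain, IsChain,
      isSemistandardAcross_box_iff, isSemistandardAcross_box_iff, hglued]
    tauto

theorem zetaTrunc_Gdiagram_eq {n : ℕ} (hn : 1 ≤ n) (M : ℕ) :
    zetaTrunc (Gdiagram n) (fillG n) M =
      zetaTrunc (stairA n) (fillAB 1 3) M * zetaTrunc (stairB (n - 1)) (fillAB 3 1) M -
        zetaTrunc (stairS n) (fillAB 3 1) M * zetaTrunc (stairSstar n) (fillAB 1 3) M := by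
  rw [zetaTrunc_Gdiagram hn, stairA_eq, stairB_eq, show 2 * (n - 1) + 1 = 2 * n - 1 by omega,
    stairS_eq, stairSstar_eq hn,
    zetaTrunc_image_box (fun t _ => fillAB_one_three_box t) (by omega : 2 * n < 2 * n + 1),
    zetaTrunc_image_box (fun t _ => fillAB_three_one_box t) (by omega : 2 * n - 1 < 2 * n + 1),
    zetaTrunc_image_box (fun t _ => fillAB_three_one_box t) (by omega : 2 * n < 2 * n + 1),
    zetaTrunc_image_box (fun t _ => fillAB_one_three_box t) (by omega : 2 * n - 1 < 2 * n + 1),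
    sum_mul_sum_eq_sum_gluedPairs_add hn]
  ring

end GluedStair

/-- The `2 × 2` Jacobi–Trudi identity for the glued stairs:
`G_{1,3}(n) = A_{1,3}(n)·B_{1,3}(n-1) - S_{1,3}(n)·S⋆_{1,3}(n)` for `n ≥ 1`. -/
theorem schurZeta_G_jacobiTrudi (n : ℕ) (hn : 1 ≤ n)
    (a13 b13 s13 ss13 g13 : ℝ)
    (hA : Tendsto (fun M => zetaTrunc (stairA n) (fillAB 1 3) M) atTop (nhds a13))
    (hB : Tendsto (fun M => zetaTrunc (stairB (n - 1)) (fillAB 3 1) M) atTop (nhds b13))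
    (hS : Tendsto (fun M => zetaTrunc (stairS n) (fillAB 3 1) M) atTop (nhds s13))
    (hSs : Tendsto (fun M => zetaTrunc (stairSstar n) (fillAB 1 3) M) atTop (nhds ss13))
    (hG : Tendsto (fun M => zetaTrunc (Gdiagram n) (fillG n) M) atTop (nhds g13)) :
    g13 = a13 * b13 - s13 * ss13 := by
  have hlim := (hA.mul hB).sub (hS.mul hSs)
  simp only [← GluedStair.zetaTrunc_Gdiagram_eq hn] at hlim
  exact tendsto_nhds_unique hG hlim
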